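/- Bias of the OLS estimand under a single unmeasured confounder (Proposition 1): let H be a real Hilbert space, W a complete subspace (representing the span of the observed covariates X and instrument Z), and y, d, u ∈ H such that d^{⊥W} ≠ 0, u^{⊥W} ≠ 0, d^{⊥W+span(u)} ≠ 0, y^{⊥W+span(d)} ≠ 0, and u^{⊥W+span(d)} ≠ 0. Then β_{y∼d|W+span(u)} = β_{y∼d|W} − R_{y∼u|W+span(d)}·f_{d∼u|W}·σ_{y∼W+span(d)}/σ_{d∼W}, where β_{y∼d|M} := ⟨y^{⊥M}, d^{⊥M}⟩/‖d^{⊥M}‖². -/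

import Mathlib

/-!
R²-calculus in real Hilbert spaces (Freidling & Zhao, "Optimization-based
Sensitivity Analysis for Unmeasured Confounding using Partial Correlations").

Residualizing on `W ⊔ span x` is residualizing on `W` and then on `x^{⊥W}`
(Frisch–Waugh–Lovell). Expressing the Gram data of the two enlarged subspaces through
that of `y^{⊥W}, d^{⊥W}, u^{⊥W}` gives the omitted-variable-bias identity
`β_{y∼d|W} = β_{y∼d|W+u} + β_{y∼u|W+d} · β_{u∼d|W}`. Writing each coefficient as
`β_{y∼x|M} = R_{y∼x|M} · σ_{y∼M}/σ_{x∼M}` and using `σ_{u∼W+d} = σ_{u∼W} √(1 − R²_{d∼u|W})`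
turns the bias term into `R_{y∼u|W+d} · f_{d∼u|W} · σ_{y∼W+d}/σ_{d∼W}`.
-/

noncomputable section

open Submodule RealInnerProductSpace

variable {H : Type*} [NormedAddCommGroup H] [InnerProductSpace ℝ H]

/-- The residual `h^{⊥M} = h − P_M h` of `h` after projecting onto `M`. -/
def resid (M : Submodule ℝ H) [HasOrthogonalProjection M] (h : H) : H :=
  h - (orthogonalProjection M h : H)

/-- The marginal R²-value `R²_{y∼X} = 1 − ‖y^{⊥X}‖²/‖y‖²`. -/
def R2 (y : H) (X : Submodule ℝ H) [HasOrthogonalProjection X] : ℝ :=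
  1 - ‖resid X y‖ ^ 2 / ‖y‖ ^ 2

/-- The partial R²-value `R²_{y∼X|Z} = (R²_{y∼X+Z} − R²_{y∼Z})/(1 − R²_{y∼Z})`. -/
def R2p (y : H) (X Z : Submodule ℝ H) [HasOrthogonalProjection (X ⊔ Z)]
    [HasOrthogonalProjection Z] : ℝ :=
  (R2 y (X ⊔ Z) - R2 y Z) / (1 - R2 y Z)

/-- The partial R-value `R_{y∼x|Z} = ⟪y^{⊥Z}, x^{⊥Z}⟫/(‖y^{⊥Z}‖·‖x^{⊥Z}‖)`. -/
def Rp (y x : H) (Z : Submodule ℝ H) [HasOrthogonalProjection Z] : ℝ :=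
  ⟪resid Z y, resid Z x⟫ / (‖resid Z y‖ * ‖resid Z x‖)

/-- The partial f-value `f_{y∼x|Z} = R_{y∼x|Z}/√(1 − R²_{y∼x|Z})`. -/
def fp (y x : H) (Z : Submodule ℝ H) [HasOrthogonalProjection Z] : ℝ :=
  Rp y x Z / Real.sqrt (1 - Rp y x Z ^ 2)

/-- The regression estimand `β_{y∼d|M} = ⟪y^{⊥M}, d^{⊥M}⟫/‖d^{⊥M}‖²`. -/
def betaReg (y d : H) (M : Submodule ℝ H) [HasOrthogonalProjection M] : ℝ :=
  ⟪resid M y, resid M d⟫ / ‖resid M d‖ ^ 2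

/-- `σ_{y∼M} = ‖y^{⊥M}‖`. -/
def sigv (y : H) (M : Submodule ℝ H) [HasOrthogonalProjection M] : ℝ :=
  ‖resid M y‖

section Residual

variable (M : Submodule ℝ H) [HasOrthogonalProjection M]

lemma resid_mem_orthogonal (h : H) : resid M h ∈ Mᗮ :=
  sub_starProjection_mem_orthogonal h

lemma sub_resid_mem (h : H) : h - resid M h ∈ M := by
  simp [resid]

lemma resid_eq_of_mem_orthogonal {h r : H} (hr : r ∈ Mᗮ) (hm : h - r ∈ M) :
    resid M h = r := by
  have : M.starProjection h = h - r := eq_starProjection_of_mem_orthogonal hm (by simpa using hr)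
  simp [resid, this]

lemma inner_eq_inner_resid_of_mem_orthogonal (x : H) {r : H} (hr : r ∈ Mᗮ) :
    ⟪x, r⟫ = ⟪resid M x, r⟫ := by
  rw [← sub_eq_zero, ← inner_sub_left]
  exact inner_right_of_mem_orthogonal (sub_resid_mem M x) hr

lemma betaReg_mul_norm_sq (y d : H) :
    betaReg y d M * ‖resid M d‖ ^ 2 = ⟪resid M y, resid M d⟫ := by
  rcases eq_or_ne (resid M d) 0 with hd | hd
  · simp [hd]
  · rw [betaReg, div_mul_cancel₀ _ (by positivity)]

lemma Rp_comm (y x : H) : Rp y x M = Rp x y M := by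
  rw [Rp, Rp, real_inner_comm, mul_comm]

lemma betaReg_eq_Rp_mul (y x : H) : betaReg y x M = Rp y x M * (sigv y M / sigv x M) := by
  rcases eq_or_ne (resid M y) 0 with hy | hy
  · simp [betaReg, Rp, sigv, hy]
  rcases eq_or_ne (resid M x) 0 with hx | hx
  · simp [betaReg, Rp, sigv, hx]
  have := norm_ne_zero_iff.2 hy
  have := norm_ne_zero_iff.2 hx
  rw [betaReg, Rp, sigv, sigv]
  field_simp

end Residual

section SupSpanSingleton

variable (W : Submodule ℝ H) [HasOrthogonalProjection W] (x : H)
  [HasOrthogonalProjection (W ⊔ (ℝ ∙ x))]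

theorem resid_sup_span_singleton (h : H) :
    resid (W ⊔ (ℝ ∙ x)) h = resid W h - betaReg h x W • resid W x := by
  apply resid_eq_of_mem_orthogonal
  · have hW : resid W h - betaReg h x W • resid W x ∈ Wᗮ :=
      sub_mem (resid_mem_orthogonal W h) (smul_mem _ _ (resid_mem_orthogonal W x))
    rw [← Submodule.inf_orthogonal]
    refine mem_inf.2 ⟨hW, ?_⟩
    rw [mem_orthogonal_singleton_iff_inner_right, inner_eq_inner_resid_of_mem_orthogonal W x hW,
      inner_sub_right, real_inner_smul_right, real_inner_self_eq_norm_sq, betaReg_mul_norm_sq,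
      real_inner_comm, sub_self]
  · have : h - (resid W h - betaReg h x W • resid W x) =
        (h - resid W h) - betaReg h x W • (x - resid W x) + betaReg h x W • x := by module
    rw [this]
    exact add_mem (sub_mem (mem_sup_left (sub_resid_mem W h))
      (mem_sup_left (smul_mem _ _ (sub_resid_mem W x))))
      (mem_sup_right (smul_mem _ _ (mem_span_singleton_self x)))

theorem inner_resid_sup_span_singleton_mul (y d : H) :
    ⟪resid (W ⊔ (ℝ ∙ x)) y, resid (W ⊔ (ℝ ∙ x)) d⟫ * ‖resid W x‖ ^ 2 =
      ⟪resid W y, resid W d⟫ * ‖resid W x‖ ^ 2 -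
        ⟪resid W y, resid W x⟫ * ⟪resid W d, resid W x⟫ := by
  rcases eq_or_ne (resid W x) 0 with hx | hx
  · simp [hx]
  have := norm_ne_zero_iff.2 hx
  simp only [resid_sup_span_singleton, betaReg, inner_sub_left, inner_sub_right,
    real_inner_smul_left, real_inner_smul_right, real_inner_self_eq_norm_sq]
  field_simp
  rw [real_inner_comm (resid W x) (resid W d)]
  ring

theorem norm_resid_sup_span_singleton_sq_mul (d : H) :
    ‖resid (W ⊔ (ℝ ∙ x)) d‖ ^ 2 * ‖resid W x‖ ^ 2 =
      ‖resid W d‖ ^ 2 * ‖resid W x‖ ^ 2 - ⟪resid W d, resid W x⟫ ^ 2 := by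
  simpa only [real_inner_self_eq_norm_sq, ← sq] using inner_resid_sup_span_singleton_mul W x d d

theorem sigv_sup_span_singleton (u : H) :
    sigv u (W ⊔ (ℝ ∙ x)) = sigv u W * √(1 - Rp x u W ^ 2) := by
  rcases eq_or_ne (resid W x) 0 with hx | hx
  · simp [sigv, Rp, resid_sup_span_singleton, hx]
  rcases eq_or_ne (resid W u) 0 with hu | hu
  · simp [sigv, resid_sup_span_singleton, betaReg, hu]
  have hsq := norm_resid_sup_span_singleton_sq_mul W x u
  have := norm_ne_zero_iff.2 hx
  have := norm_ne_zero_iff.2 hu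
  rw [sigv, sigv, ← Real.sqrt_sq (norm_nonneg (resid W u)), ← Real.sqrt_mul (sq_nonneg _),
    ← Real.sqrt_sq (norm_nonneg (resid _ u)), Rp, real_inner_comm]
  congr 1
  field_simp
  linear_combination hsq

theorem betaReg_sup_span_singleton_mul (y d : H) :
    betaReg y d (W ⊔ (ℝ ∙ x)) *
        (‖resid W d‖ ^ 2 * ‖resid W x‖ ^ 2 - ⟪resid W d, resid W x⟫ ^ 2) =
      ⟪resid W y, resid W d⟫ * ‖resid W x‖ ^ 2 -
        ⟪resid W y, resid W x⟫ * ⟪resid W d, resid W x⟫ := by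
  rw [← inner_resid_sup_span_singleton_mul, ← norm_resid_sup_span_singleton_sq_mul, ← mul_assoc,
    betaReg_mul_norm_sq]

end SupSpanSingleton

theorem betaReg_eq_betaReg_sup_add_mul (W : Submodule ℝ H) [HasOrthogonalProjection W]
    (y d u : H) [HasOrthogonalProjection (W ⊔ (ℝ ∙ u))] [HasOrthogonalProjection (W ⊔ (ℝ ∙ d))]
    (hd : resid W d ≠ 0) (hu : resid W u ≠ 0) (hdu : resid (W ⊔ (ℝ ∙ u)) d ≠ 0) :
    betaReg y d W = betaReg y d (W ⊔ (ℝ ∙ u)) + betaReg y u (W ⊔ (ℝ ∙ d)) * betaReg u d W := by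
  have hD : ‖resid W d‖ ^ 2 ≠ 0 := by positivity
  have hK : ‖resid W d‖ ^ 2 * ‖resid W u‖ ^ 2 - ⟪resid W d, resid W u⟫ ^ 2 ≠ 0 := by
    rw [← norm_resid_sup_span_singleton_sq_mul]
    positivity
  have hyd := betaReg_sup_span_singleton_mul W u y d
  have hyu := betaReg_sup_span_singleton_mul W d y u
  rw [real_inner_comm (resid W d) (resid W u)] at hyu
  have hyd_W : betaReg y d W = ⟪resid W y, resid W d⟫ / ‖resid W d‖ ^ 2 := rfl
  have hud_W : betaReg u d W = ⟪resid W d, resid W u⟫ / ‖resid W d‖ ^ 2 := by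
    rw [betaReg, real_inner_comm]
  rw [hyd_W, hud_W]
  field_simp
  apply mul_right_cancel₀ hK
  linear_combination -‖resid W d‖ ^ 2 * hyd - ⟪resid W d, resid W u⟫ * hyu

theorem betaReg_sup_mul_betaReg_eq_Rp_mul_fp (W : Submodule ℝ H) [HasOrthogonalProjection W]
    (y d u : H) [HasOrthogonalProjection (W ⊔ (ℝ ∙ d))] (hu : resid W u ≠ 0) :
    betaReg y u (W ⊔ (ℝ ∙ d)) * betaReg u d W =
      Rp y u (W ⊔ (ℝ ∙ d)) * fp d u W * (sigv y (W ⊔ (ℝ ∙ d)) / sigv d W) := by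
  have : sigv u W ≠ 0 := norm_ne_zero_iff.2 hu
  rw [betaReg_eq_Rp_mul _ y u, betaReg_eq_Rp_mul W u d, sigv_sup_span_singleton W d u,
    Rp_comm W u d, fp]
  field_simp

theorem ols_bias_single_confounder_general
    (W : Submodule ℝ H) [CompleteSpace W] (y d u : H)
    [CompleteSpace ↥(W ⊔ (ℝ ∙ u))] [CompleteSpace ↥(W ⊔ (ℝ ∙ d))]
    (hd : resid W d ≠ 0) (hu : resid W u ≠ 0)
    (hd2 : resid (W ⊔ (ℝ ∙ u)) d ≠ 0) :
    betaReg y d (W ⊔ (ℝ ∙ u)) =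
      betaReg y d W -
        Rp y u (W ⊔ (ℝ ∙ d)) * fp d u W * (sigv y (W ⊔ (ℝ ∙ d)) / sigv d W) := by
  rw [betaReg_eq_betaReg_sup_add_mul W y d u hd hu hd2,
    betaReg_sup_mul_betaReg_eq_Rp_mul_fp W y d u hu]
  ring

/-- bias of the OLS estimand under a single unmeasured confounder
(Proposition 1). -/
theorem ols_bias_single_confounder [CompleteSpace H]
    (W : Submodule ℝ H) [CompleteSpace W] (y d u : H)
    [CompleteSpace ↥(W ⊔ (ℝ ∙ u))] [CompleteSpace ↥(W ⊔ (ℝ ∙ d))]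
    (hd : resid W d ≠ 0) (hu : resid W u ≠ 0)
    (hd2 : resid (W ⊔ (ℝ ∙ u)) d ≠ 0)
    (hy : resid (W ⊔ (ℝ ∙ d)) y ≠ 0) (hu2 : resid (W ⊔ (ℝ ∙ d)) u ≠ 0) :
    betaReg y d (W ⊔ (ℝ ∙ u)) =
      betaReg y d W -
        Rp y u (W ⊔ (ℝ ∙ d)) * fp d u W * (sigv y (W ⊔ (ℝ ∙ d)) / sigv d W) :=
  ols_bias_single_confounder_general W y d u hd hu hd2
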